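/- For every even nonnegative integer n, the sum over k from 0 to n of k^3 * binomial(n,k)*binomial(n+k,k)*binomial(2k,k) / (-4)^k equals (n^2*(n+1)^2*(2n+1)^2 / 15) * binomial(n, n/2)^2 / 16^(n/2) (as rational numbers). -/

import Mathlib

/-!
Creative telescoping (Zeilberger's algorithm). Writing `F n k` for the summand, the rational
certificate `G n k = 2 (n+1)(n+2)(2n+3)(1-k)³ / ((n+1+k)(n+2+k)) · F (n+2) k` satisfies
`(n+1)⁴ F (n+2) k + (2n+3)(3n²+9n+5) F (n+1) k - (n+2)⁴ F n k = G n (k+1) - G n k`,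
which follows from the first-order recurrences of `F` in `n` and in `k`. Summing over `k`, the right
side telescopes to zero, so the sums satisfy a second-order recurrence with nonvanishing leading
coefficient. The closed form `p n · C(2m, m)² / 16^m`, with `m = ⌊n/2⌋` and a polynomial `p`
depending on the parity of `n`, satisfies the same recurrence and initial values.
-/

open Finset

section Binomial

variable {R : Type*} [CommRing R]

theorem cast_choose_mul_add_one (n k : ℕ) :
    (n.choose k : R) * (n + 1) = ((n + 1).choose k : R) * (n + 1 - k) := by
  rcases le_or_gt k (n + 1) with h | h
  · have e := congrArg (Nat.cast : ℕ → R) (Nat.choose_mul_succ_eq n k)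
    push_cast [Nat.cast_sub h] at e
    exact e
  · simp [Nat.choose_eq_zero_of_lt h, Nat.choose_eq_zero_of_lt (Nat.lt_of_succ_lt h)]

theorem cast_choose_succ_right_mul (n k : ℕ) :
    (n.choose (k + 1) : R) * (k + 1) = (n.choose k : R) * (n - k) := by
  rcases le_or_gt k n with h | h
  · have e := congrArg (Nat.cast : ℕ → R) (Nat.choose_succ_right_eq n k)
    push_cast [Nat.cast_sub h] at e
    exact e
  · simp [Nat.choose_eq_zero_of_lt h, Nat.choose_eq_zero_of_lt (Nat.lt_succ_of_lt h)]

theorem cast_choose_add_mul_add_one (n k : ℕ) :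
    ((n + k).choose k : R) * (n + 1 + k) = ((n + 1 + k).choose k : R) * (n + 1) := by
  have e := cast_choose_mul_add_one (R := R) (n + k) k
  rw [show n + k + 1 = n + 1 + k by omega] at e
  push_cast at e
  linear_combination e

theorem cast_centralBinom_succ_mul (k : ℕ) :
    ((k + 1).centralBinom : R) * (k + 1) = 2 * (2 * k + 1) * k.centralBinom := by
  have e := congrArg (Nat.cast : ℕ → R) (Nat.succ_mul_centralBinom_succ k)
  push_cast at e
  linear_combination e

end Binomial

theorem eq_of_linear_recurrence {R : Type*} [CommRing R] [NoZeroDivisors R] (a b c u v : ℕ → R)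
    (ha : ∀ n, a n ≠ 0)
    (hu : ∀ n, a n * u (n + 2) + b n * u (n + 1) = c n * u n)
    (hv : ∀ n, a n * v (n + 2) + b n * v (n + 1) = c n * v n)
    (h0 : u 0 = v 0) (h1 : u 1 = v 1) (n : ℕ) : u n = v n := by
  induction n using Nat.twoStepInduction with
  | zero => exact h0
  | one => exact h1
  | more n ih₀ ih₁ =>
    have h : a n * (u (n + 2) - v (n + 2)) = 0 := by
      rw [mul_sub, sub_eq_zero]
      linear_combination (hu n) - (hv n) - b n * ih₁ + c n * ih₀
    exact sub_eq_zero.1 ((mul_eq_zero.1 h).resolve_left (ha n))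

namespace CubicBinomialSum

def hterm (n k : ℕ) : ℚ := (n.choose k * (n + k).choose k * (2 * k).choose k : ℚ) / (-4) ^ k

def summand (n k : ℕ) : ℚ :=
  (k : ℚ) ^ 3 * (Nat.choose n k * Nat.choose (n + k) k * Nat.choose (2 * k) k : ℚ) / (-4) ^ k

theorem summand_eq_mul_hterm (n k : ℕ) : summand n k = (k : ℚ) ^ 3 * hterm n k :=
  mul_div_assoc _ _ _

theorem hterm_succ_n_ratio (n k : ℕ) :
    hterm n k * (n + 1 + k) = hterm (n + 1) k * (n + 1 - k) := by
  refine mul_right_cancel₀ (b := (n : ℚ) + 1) (by positivity) ?_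
  have e1 := cast_choose_mul_add_one (R := ℚ) n k
  have e2 := cast_choose_add_mul_add_one (R := ℚ) n k
  simp only [hterm]
  set E := ((2 * k).choose k : ℚ) / (-4) ^ k
  linear_combination (E * (n + k).choose k * (n + 1 + k)) * e1
    + (E * (n + 1).choose k * (n + 1 - k)) * e2

theorem hterm_succ_k_ratio (n k : ℕ) :
    2 * ((k : ℚ) + 1) ^ 3 * hterm n (k + 1)
      = -((n - k) * (n + k + 1) * (2 * k + 1)) * hterm n k := by
  have e1 := cast_choose_succ_right_mul (R := ℚ) n k
  have e2 := congrArg (Nat.cast : ℕ → ℚ) (Nat.add_one_mul_choose_eq (n + k) k)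
  have e3 := cast_centralBinom_succ_mul (R := ℚ) k
  simp only [hterm, ← Nat.centralBinom_eq_two_mul_choose, pow_succ, ← add_assoc]
  push_cast at e2 ⊢
  set p : ℚ := (-4) ^ k
  linear_combination (-1 / (2 * p)) * (
    ((n + k + 1).choose (k + 1) * (k + 1) * (k + 1).centralBinom * (k + 1)) * e1
      - (n.choose k * (n - k) * (k + 1).centralBinom * (k + 1)) * e2
      + (n.choose k * (n - k) * (n + k).choose k * (n + k + 1)) * e3)

def certificate (n k : ℕ) : ℚ :=
  2 * (n + 1) * (n + 2) * (2 * n + 3) * (1 - k) ^ 3 / ((n + 1 + k) * (n + 2 + k))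
    * summand (n + 2) k

theorem summand_recurrence_eq_certificate_sub (n k : ℕ) :
    ((n : ℚ) + 1) ^ 4 * summand (n + 2) k
      + (2 * n + 3) * (3 * n ^ 2 + 9 * n + 5) * summand (n + 1) k
      - ((n : ℚ) + 2) ^ 4 * summand n k
      = certificate n (k + 1) - certificate n k := by
  have hk : (k : ℚ) + 1 ≠ 0 := by positivity
  have hn1 : (n : ℚ) + 1 + k ≠ 0 := by positivity
  have hn2 : (n : ℚ) + 2 + k ≠ 0 := by positivity
  have hn3 : (n : ℚ) + 3 + k ≠ 0 := by positivity
  have h1 : hterm (n + 1) k = hterm (n + 2) k * (n + 2 - k) / (n + 2 + k) := by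
    have e := hterm_succ_n_ratio (n + 1) k
    push_cast at e
    rw [show n + 1 + 1 = n + 2 from rfl] at e
    field_simp
    linear_combination e
  have h0 : hterm n k = hterm (n + 1) k * (n + 1 - k) / (n + 1 + k) := by
    have e := hterm_succ_n_ratio n k
    field_simp
    linear_combination e
  have h2 : hterm (n + 2) (k + 1)
      = -((n + 2 - k) * (n + 3 + k) * (2 * k + 1)) * hterm (n + 2) k / (2 * (k + 1) ^ 3) := by
    have e := hterm_succ_k_ratio (n + 2) k
    push_cast at e
    field_simp
    linear_combination e
  simp only [certificate, summand_eq_mul_hterm]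
  rw [h0, h1, h2]
  push_cast
  field_simp
  ring

def binomialSum (n : ℕ) : ℚ := ∑ k ∈ range (n + 1), summand n k

theorem summand_eq_zero_of_lt {n k : ℕ} (h : n < k) : summand n k = 0 := by
  simp [summand, Nat.choose_eq_zero_of_lt h]

theorem binomialSum_eq_sum_range {n N : ℕ} (h : n + 1 ≤ N) :
    binomialSum n = ∑ k ∈ range N, summand n k :=
  sum_subset (range_subset_range.2 h) fun k _ hk ↦
    summand_eq_zero_of_lt (by simpa using hk)

theorem binomialSum_recurrence (n : ℕ) :
    ((n : ℚ) + 1) ^ 4 * binomialSum (n + 2)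
      + (2 * n + 3) * (3 * n ^ 2 + 9 * n + 5) * binomialSum (n + 1)
      = ((n : ℚ) + 2) ^ 4 * binomialSum n := by
  rw [← sub_eq_zero, binomialSum_eq_sum_range (N := n + 3) le_rfl,
    binomialSum_eq_sum_range (N := n + 3) (by omega),
    binomialSum_eq_sum_range (N := n + 3) (by omega),
    mul_sum, mul_sum, mul_sum, ← sum_add_distrib, ← sum_sub_distrib,
    sum_congr rfl fun k _ ↦ summand_recurrence_eq_certificate_sub n k, sum_range_sub]
  simp [certificate, summand]

def centralWeight (m : ℕ) : ℚ := (m.centralBinom : ℚ) ^ 2 / 16 ^ m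

theorem centralWeight_succ (m : ℕ) :
    centralWeight (m + 1) = centralWeight m * (2 * m + 1) ^ 2 / (2 * (m + 1)) ^ 2 := by
  have hm : (m : ℚ) + 1 ≠ 0 := by positivity
  have e := cast_centralBinom_succ_mul (R := ℚ) m
  have e' : ((m + 1).centralBinom : ℚ) = 2 * (2 * m + 1) * m.centralBinom / (m + 1) := by
    field_simp
    linear_combination e
  rw [centralWeight, centralWeight, e', pow_succ]
  field_simp
  ring

def evenPoly (x : ℚ) : ℚ := x ^ 2 * (x + 1) ^ 2 * (2 * x + 1) ^ 2 / 15

def oddPoly (x : ℚ) : ℚ := -x ^ 2 * (4 * x ^ 4 + 8 * x ^ 3 + 3 * x ^ 2 - x + 1) / 15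

def closedForm (n : ℕ) : ℚ := (if Even n then evenPoly n else oddPoly n) * centralWeight (n / 2)

theorem closedForm_two_mul (m : ℕ) :
    closedForm (2 * m) = evenPoly (2 * m) * centralWeight m := by
  simp [closedForm]

theorem closedForm_two_mul_add_one (m : ℕ) :
    closedForm (2 * m + 1) = oddPoly (2 * m + 1) * centralWeight m := by
  simp [closedForm, Nat.mul_add_div]

theorem closedForm_recurrence (n : ℕ) :
    ((n : ℚ) + 1) ^ 4 * closedForm (n + 2)
      + (2 * n + 3) * (3 * n ^ 2 + 9 * n + 5) * closedForm (n + 1)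
      = ((n : ℚ) + 2) ^ 4 * closedForm n := by
  have hm (m : ℕ) : (m : ℚ) + 1 ≠ 0 := by positivity
  obtain ⟨m, rfl | rfl⟩ := Nat.even_or_odd' n
  · rw [show 2 * m + 2 = 2 * (m + 1) by ring, closedForm_two_mul, closedForm_two_mul,
      closedForm_two_mul_add_one, centralWeight_succ]
    simp only [evenPoly, oddPoly]
    push_cast
    field_simp
    ring
  · rw [show 2 * m + 1 + 2 = 2 * (m + 1) + 1 by ring, show 2 * m + 1 + 1 = 2 * (m + 1) by ring,
      closedForm_two_mul, closedForm_two_mul_add_one, closedForm_two_mul_add_one,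
      centralWeight_succ]
    simp only [evenPoly, oddPoly]
    push_cast
    field_simp
    ring

theorem binomialSum_eq_closedForm (n : ℕ) : binomialSum n = closedForm n :=
  eq_of_linear_recurrence _ _ _ _ _ (fun _ ↦ by positivity) binomialSum_recurrence
    closedForm_recurrence (by simp [binomialSum, summand, closedForm, evenPoly])
    (by norm_num [binomialSum, summand, closedForm, oddPoly, centralWeight, sum_range_succ]) n

end CubicBinomialSum

theorem id4_even (n : ℕ) (hn : Even n) :
    ∑ k ∈ Finset.range (n + 1),
        (k : ℚ) ^ 3 * (Nat.choose n k * Nat.choose (n + k) k * Nat.choose (2 * k) k : ℚ)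
          / (-4) ^ k
      = ((n : ℚ) ^ 2 * (n + 1) ^ 2 * (2 * (n : ℚ) + 1) ^ 2 / 15)
          * (Nat.choose n (n / 2) : ℚ) ^ 2 / 16 ^ (n / 2) := by
  obtain ⟨m, rfl⟩ := hn
  rw [← two_mul, Nat.mul_div_cancel_left m two_pos, ← Nat.centralBinom_eq_two_mul_choose]
  calc _ = CubicBinomialSum.closedForm (2 * m) := CubicBinomialSum.binomialSum_eq_closedForm _
    _ = _ := by
      rw [CubicBinomialSum.closedForm_two_mul, CubicBinomialSum.evenPoly,
        CubicBinomialSum.centralWeight]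
      push_cast
      ring
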